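/- Let m, N_x, N_y ∈ ℕ with N_x, N_y ≥ 1, let a, b ∈ ℝ, h_x, h_y > 0, and define nodes x_j = a + j·h_x (j = 0,…,N_x) and y_k = b + k·h_y (k = 0,…,N_y), with cells I_{j,k} = [x_{j−1}, x_j] × [y_{k−1}, y_k]. Let s ≥ 1, α_1,…,α_s ∈ ℝ, Δt ∈ ℝ, and for each stage i and each cell (j,k) let F_{i,j,k} and G_{i,j,k} be real polynomials in two variables (the stage fluxes in the x- and y-direction). For each cell let u_{j,k} and v_{j,k} be real polynomials in two variables satisfying the update v_{j,k} = u_{j,k} − Δt · Σ_{i=1}^{s} α_i · ( ∂_x F_{i,j,k} + ∂_y G_{i,j,k} ). Assume the fluxes are continuous across the corresponding interfaces and periodic: for every i, F_{i,j,k}(x_j, y) = F_{i,j+1,k}(x_j, y) for all y and all interior j, F_{i,N_x,k}(x_{N_x}, y) = F_{i,1,k}(x_0, y) for all y and k; and G_{i,j,k}(x, y_k) = G_{i,j,k+1}(x, y_k) for all x and all interior k, G_{i,j,N_y}(x, y_{N_y}) = G_{i,j,1}(x, y_0) for all x and j. Then the total integral of the solution is conserved over the step: Σ_{j,k} ∬_{I_{j,k}}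 v_{j,k}(x,y) dx dy = Σ_{j,k} ∬_{I_{j,k}} u_{j,k}(x,y) dx dy. -/

import Mathlib

/-!
On each cell the update subtracts `Δt ∑ αᵢ (∂ₓFᵢ + ∂ᵧGᵢ)`. By Fubini and the fundamental theorem
of calculus, the integral of `∂ₓFᵢ` over a cell is the difference of the line integrals of `Fᵢ`
along its right and left edges, and likewise for `∂ᵧGᵢ` along its top and bottom edges. Summed
over a row (resp. column) of cells these differences telescope: continuity across interior
interfaces cancels neighbouring edges, and periodicity cancels the two boundary edges.
-/

open MvPolynomial intervalIntegral Finset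

theorem Finset.sum_Icc_eq_of_cyclic_shift {M : Type*} [AddCommMonoid M] {N : ℕ} {f g : ℕ → M}
    (hshift : ∀ j ∈ Icc 1 (N - 1), g j = f (j + 1)) (hwrap : g N = f 1) :
    ∑ j ∈ Icc 1 N, g j = ∑ j ∈ Icc 1 N, f j := by
  cases N with
  | zero => simp
  | succ n =>
    rw [sum_Icc_succ_top (by omega), hwrap, sum_congr rfl fun j hj => hshift j (by simpa using hj),
      ← Ico_add_one_right_eq_Icc, ← Ico_add_one_right_eq_Icc, sum_Ico_add',
      sum_eq_sum_Ico_succ_bot (show 1 < n + 1 + 1 by omega), add_comm]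

namespace MvPolynomial

theorem hasDerivAt_eval_update {σ 𝕜 : Type*} [DecidableEq σ] [NontriviallyNormedField 𝕜]
    (P : MvPolynomial σ 𝕜) (x : σ → 𝕜) (i : σ) (t : 𝕜) :
    HasDerivAt (fun t => eval (Function.update x i t) P)
      (eval (Function.update x i t) (pderiv i P)) t := by
  induction P using MvPolynomial.induction_on with
  | C r => simpa using hasDerivAt_const t r
  | add p q hp hq => simp only [map_add]; exact hp.add hq
  | mul_X p j hp =>
    have hj : HasDerivAt (fun t => Function.update x i t j)
        (eval (Function.update x i t) (pderiv i (X j))) t := by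
      rcases eq_or_ne j i with rfl | hji
      · simpa using hasDerivAt_id' t
      · simpa [Function.update_of_ne hji, pderiv_X_of_ne hji] using hasDerivAt_const t (x j)
    simp only [pderiv_mul, map_add, map_mul, eval_X]
    exact hp.mul hj

theorem integral_eval_update_pderiv {σ : Type*} [DecidableEq σ]
    (P : MvPolynomial σ ℝ) (x : σ → ℝ) (i : σ) (a b : ℝ) :
    ∫ t in a..b, eval (Function.update x i t) (pderiv i P)
      = eval (Function.update x i b) P - eval (Function.update x i a) P :=
  integral_eq_sub_of_hasDerivAt (fun t _ => P.hasDerivAt_eval_update x i t)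
    (((continuous_eval _).comp (continuous_const.update i continuous_id)).intervalIntegrable a b)

section Bivariate

variable (P : MvPolynomial (Fin 2) ℝ)

theorem continuous_eval_vecCons₂ : Continuous (Function.uncurry fun x y : ℝ => eval ![x, y] P) :=
  (continuous_eval P).comp (by fun_prop)

theorem integral_eval_pderiv_zero (y a b : ℝ) :
    ∫ x in a..b, eval ![x, y] (pderiv 0 P) = eval ![b, y] P - eval ![a, y] P := by
  have hupd (t : ℝ) : Function.update ![0, y] 0 t = ![t, y] := by ext k; fin_cases k <;> rfl
  simpa only [hupd] using integral_eval_update_pderiv P ![0, y] 0 a b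

theorem integral_eval_pderiv_one (x a b : ℝ) :
    ∫ y in a..b, eval ![x, y] (pderiv 1 P) = eval ![x, b] P - eval ![x, a] P := by
  have hupd (t : ℝ) : Function.update ![x, 0] 1 t = ![x, t] := by ext k; fin_cases k <;> rfl
  simpa only [hupd] using integral_eval_update_pderiv P ![x, 0] 1 a b

end Bivariate

noncomputable def rectIntegral (x₀ x₁ y₀ y₁ : ℝ) : MvPolynomial (Fin 2) ℝ →ₗ[ℝ] ℝ where
  toFun P := ∫ x in x₀..x₁, ∫ y in y₀..y₁, eval ![x, y] P
  map_add' P Q := by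
    have hy (x : ℝ) (R : MvPolynomial (Fin 2) ℝ) :
        IntervalIntegrable (fun y => eval ![x, y] R) MeasureTheory.volume y₀ y₁ :=
      (R.continuous_eval_vecCons₂.uncurry_left x).intervalIntegrable _ _
    have hx (R : MvPolynomial (Fin 2) ℝ) : IntervalIntegrable
        (fun x => ∫ y in y₀..y₁, eval ![x, y] R) MeasureTheory.volume x₀ x₁ :=
      (continuous_parametric_intervalIntegral_of_continuous' R.continuous_eval_vecCons₂ _ _
        ).intervalIntegrable _ _
    simp only [map_add]
    simp_rw [integral_add (hy _ P) (hy _ Q)]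
    exact integral_add (hx P) (hx Q)
  map_smul' c P := by simp [integral_const_mul]

section Rectangle

variable (x₀ x₁ y₀ y₁ : ℝ) (P : MvPolynomial (Fin 2) ℝ)

theorem rectIntegral_apply :
    rectIntegral x₀ x₁ y₀ y₁ P = ∫ x in x₀..x₁, ∫ y in y₀..y₁, eval ![x, y] P :=
  rfl

theorem rectIntegral_pderiv_zero :
    rectIntegral x₀ x₁ y₀ y₁ (pderiv 0 P)
      = (∫ y in y₀..y₁, eval ![x₁, y] P) - ∫ y in y₀..y₁, eval ![x₀, y] P := by
  have hint : MeasureTheory.IntegrableOn (Function.uncurry fun x y => eval ![x, y] (pderiv 0 P))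
      (Set.uIoc x₀ x₁ ×ˢ Set.uIoc y₀ y₁) :=
    ((pderiv 0 P).continuous_eval_vecCons₂.continuousOn.integrableOn_compact
      (isCompact_uIcc.prod isCompact_uIcc)).mono_set
      (Set.prod_mono Set.uIoc_subset_uIcc Set.uIoc_subset_uIcc)
  rw [rectIntegral_apply, MeasureTheory.intervalIntegral_intervalIntegral_swap hint]
  simp_rw [integral_eval_pderiv_zero]
  exact integral_sub ((P.continuous_eval_vecCons₂.uncurry_left x₁).intervalIntegrable _ _)
    ((P.continuous_eval_vecCons₂.uncurry_left x₀).intervalIntegrable _ _)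

theorem rectIntegral_pderiv_one :
    rectIntegral x₀ x₁ y₀ y₁ (pderiv 1 P)
      = (∫ x in x₀..x₁, eval ![x, y₁] P) - ∫ x in x₀..x₁, eval ![x, y₀] P := by
  simp_rw [rectIntegral_apply, integral_eval_pderiv_one]
  exact integral_sub ((P.continuous_eval_vecCons₂.uncurry_right y₁).intervalIntegrable _ _)
    ((P.continuous_eval_vecCons₂.uncurry_right y₀).intervalIntegrable _ _)

end Rectangle

section Grid

variable (X Y : ℕ → ℝ) {Nx Ny : ℕ}

noncomputable def cellIntegral (j k : ℕ) : MvPolynomial (Fin 2) ℝ →ₗ[ℝ] ℝ :=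
  rectIntegral (X (j - 1)) (X j) (Y (k - 1)) (Y k)

theorem sum_cellIntegral_pderiv_zero (Φ : ℕ → ℕ → MvPolynomial (Fin 2) ℝ)
    (hcont : ∀ j ∈ Icc 1 (Nx - 1), ∀ k ∈ Icc 1 Ny, ∀ y : ℝ,
      eval ![X j, y] (Φ j k) = eval ![X j, y] (Φ (j + 1) k))
    (hper : ∀ k ∈ Icc 1 Ny, ∀ y : ℝ, eval ![X Nx, y] (Φ Nx k) = eval ![X 0, y] (Φ 1 k)) :
    ∑ j ∈ Icc 1 Nx, ∑ k ∈ Icc 1 Ny, cellIntegral X Y j k (pderiv 0 (Φ j k)) = 0 := by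
  rw [sum_comm]
  refine sum_eq_zero fun k hk => ?_
  simp only [cellIntegral, rectIntegral_pderiv_zero, sum_sub_distrib, sub_eq_zero]
  refine sum_Icc_eq_of_cyclic_shift (fun j hj => integral_congr fun y _ => ?_)
    (integral_congr fun y _ => hper k hk y)
  simpa using hcont j hj k hk y

theorem sum_cellIntegral_pderiv_one (Φ : ℕ → ℕ → MvPolynomial (Fin 2) ℝ)
    (hcont : ∀ j ∈ Icc 1 Nx, ∀ k ∈ Icc 1 (Ny - 1), ∀ x : ℝ,
      eval ![x, Y k] (Φ j k) = eval ![x, Y k] (Φ j (k + 1)))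
    (hper : ∀ j ∈ Icc 1 Nx, ∀ x : ℝ, eval ![x, Y Ny] (Φ j Ny) = eval ![x, Y 0] (Φ j 1)) :
    ∑ j ∈ Icc 1 Nx, ∑ k ∈ Icc 1 Ny, cellIntegral X Y j k (pderiv 1 (Φ j k)) = 0 := by
  refine sum_eq_zero fun j hj => ?_
  simp only [cellIntegral, rectIntegral_pderiv_one, sum_sub_distrib, sub_eq_zero]
  refine sum_Icc_eq_of_cyclic_shift (fun k hk => integral_congr fun x _ => ?_)
    (integral_congr fun x _ => hper j hj x)
  simpa using hcont j hj k hk x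

theorem sum_cellIntegral_eq_of_flux_update {s : ℕ} (α : Fin s → ℝ) (Δt : ℝ)
    (F G : Fin s → ℕ → ℕ → MvPolynomial (Fin 2) ℝ) (u v : ℕ → ℕ → MvPolynomial (Fin 2) ℝ)
    (hupdate : ∀ j ∈ Icc 1 Nx, ∀ k ∈ Icc 1 Ny,
      v j k = u j k - C Δt * ∑ i, C (α i) * (pderiv 0 (F i j k) + pderiv 1 (G i j k)))
    (hcontF : ∀ i, ∀ j ∈ Icc 1 (Nx - 1), ∀ k ∈ Icc 1 Ny, ∀ y : ℝ,
      eval ![X j, y] (F i j k) = eval ![X j, y] (F i (j + 1) k))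
    (hperF : ∀ i, ∀ k ∈ Icc 1 Ny, ∀ y : ℝ,
      eval ![X Nx, y] (F i Nx k) = eval ![X 0, y] (F i 1 k))
    (hcontG : ∀ i, ∀ j ∈ Icc 1 Nx, ∀ k ∈ Icc 1 (Ny - 1), ∀ x : ℝ,
      eval ![x, Y k] (G i j k) = eval ![x, Y k] (G i j (k + 1)))
    (hperG : ∀ i, ∀ j ∈ Icc 1 Nx, ∀ x : ℝ,
      eval ![x, Y Ny] (G i j Ny) = eval ![x, Y 0] (G i j 1)) :
    ∑ j ∈ Icc 1 Nx, ∑ k ∈ Icc 1 Ny, cellIntegral X Y j k (v j k)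
      = ∑ j ∈ Icc 1 Nx, ∑ k ∈ Icc 1 Ny, cellIntegral X Y j k (u j k) := by
  have hdiv : ∑ j ∈ Icc 1 Nx, ∑ k ∈ Icc 1 Ny, ∑ i, α i *
      (cellIntegral X Y j k (pderiv 0 (F i j k)) + cellIntegral X Y j k (pderiv 1 (G i j k)))
      = 0 := by
    rw [sum_congr rfl fun j _ => sum_comm, sum_comm]
    refine sum_eq_zero fun i _ => ?_
    simp only [← mul_sum, sum_add_distrib, sum_cellIntegral_pderiv_zero X Y _ (hcontF i) (hperF i),
      sum_cellIntegral_pderiv_one X Y _ (hcontG i) (hperG i), add_zero, mul_zero]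
  rw [sum_congr rfl fun j hj => sum_congr rfl fun k hk => by rw [hupdate j hj k hk]]
  simp only [C_mul', map_sub, map_smul, map_sum, map_add, smul_eq_mul, sum_sub_distrib, ← mul_sum,
    hdiv, mul_zero, sub_zero]

end Grid

end MvPolynomial

theorem flux_conservative_hermite_conservation_2d_general
    (Nx Ny : ℕ)
    (a b hx hy : ℝ)
    (s : ℕ) (α : Fin s → ℝ) (Δt : ℝ)
    (F G : Fin s → ℕ → ℕ → MvPolynomial (Fin 2) ℝ)
    (u v : ℕ → ℕ → MvPolynomial (Fin 2) ℝ)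
    (hupdate : ∀ j ∈ Finset.Icc 1 Nx, ∀ k ∈ Finset.Icc 1 Ny,
      v j k = u j k - C Δt * ∑ i, C (α i) *
        (pderiv 0 (F i j k) + pderiv 1 (G i j k)))
    (hcontF : ∀ (i : Fin s), ∀ j ∈ Finset.Icc 1 (Nx - 1), ∀ k ∈ Finset.Icc 1 Ny, ∀ y : ℝ,
      eval ![a + (j : ℝ) * hx, y] (F i j k) = eval ![a + (j : ℝ) * hx, y] (F i (j + 1) k))
    (hperF : ∀ (i : Fin s), ∀ k ∈ Finset.Icc 1 Ny, ∀ y : ℝ,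
      eval ![a + (Nx : ℝ) * hx, y] (F i Nx k) = eval ![a, y] (F i 1 k))
    (hcontG : ∀ (i : Fin s), ∀ j ∈ Finset.Icc 1 Nx, ∀ k ∈ Finset.Icc 1 (Ny - 1), ∀ x : ℝ,
      eval ![x, b + (k : ℝ) * hy] (G i j k) = eval ![x, b + (k : ℝ) * hy] (G i j (k + 1)))
    (hperG : ∀ (i : Fin s), ∀ j ∈ Finset.Icc 1 Nx, ∀ x : ℝ,
      eval ![x, b + (Ny : ℝ) * hy] (G i j Ny) = eval ![x, b] (G i j 1)) :
    ∑ j ∈ Finset.Icc 1 Nx, ∑ k ∈ Finset.Icc 1 Ny,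
        (∫ x in (a + ((j - 1 : ℕ) : ℝ) * hx)..(a + (j : ℝ) * hx),
          ∫ y in (b + ((k - 1 : ℕ) : ℝ) * hy)..(b + (k : ℝ) * hy),
            eval ![x, y] (v j k))
      = ∑ j ∈ Finset.Icc 1 Nx, ∑ k ∈ Finset.Icc 1 Ny,
          (∫ x in (a + ((j - 1 : ℕ) : ℝ) * hx)..(a + (j : ℝ) * hx),
            ∫ y in (b + ((k - 1 : ℕ) : ℝ) * hy)..(b + (k : ℝ) * hy),
              eval ![x, y] (u j k)) :=
  sum_cellIntegral_eq_of_flux_update (fun j => a + j * hx) (fun k => b + k * hy) α Δt F G u v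
    hupdate hcontF (by simpa using hperF) hcontG (by simpa using hperG)

/-- Two-dimensional conservation for the flux-conservative Hermite method on the uniform
tensor-product grid `x_j = a + j h_x`, `y_k = b + k h_y`, with cells
`I_{j,k} = [x_{j-1}, x_j] × [y_{k-1}, y_k]`.  The per-cell bivariate solution polynomials are
updated by `v_{j,k} = u_{j,k} - Δt ∑ i, α_i (∂_x F_{i,j,k} + ∂_y G_{i,j,k})`.  If the
`x`-direction stage fluxes `F` are continuous across vertical interfaces and periodic, and the
`y`-direction stage fluxes `G` are continuous across horizontal interfaces and periodic, then
the total (iterated) integral of the solution over all cells is conserved over the step. -/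
theorem flux_conservative_hermite_conservation_2d
    (m Nx Ny : ℕ) (hNx : 1 ≤ Nx) (hNy : 1 ≤ Ny)
    (a b hx hy : ℝ) (hhx : 0 < hx) (hhy : 0 < hy)
    (s : ℕ) (hs : 1 ≤ s) (α : Fin s → ℝ) (Δt : ℝ)
    (F G : Fin s → ℕ → ℕ → MvPolynomial (Fin 2) ℝ)
    (u v : ℕ → ℕ → MvPolynomial (Fin 2) ℝ)
    (hupdate : ∀ j ∈ Finset.Icc 1 Nx, ∀ k ∈ Finset.Icc 1 Ny,
      v j k = u j k - C Δt * ∑ i, C (α i) *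
        (pderiv 0 (F i j k) + pderiv 1 (G i j k)))
    (hcontF : ∀ (i : Fin s), ∀ j ∈ Finset.Icc 1 (Nx - 1), ∀ k ∈ Finset.Icc 1 Ny, ∀ y : ℝ,
      eval ![a + (j : ℝ) * hx, y] (F i j k) = eval ![a + (j : ℝ) * hx, y] (F i (j + 1) k))
    (hperF : ∀ (i : Fin s), ∀ k ∈ Finset.Icc 1 Ny, ∀ y : ℝ,
      eval ![a + (Nx : ℝ) * hx, y] (F i Nx k) = eval ![a, y] (F i 1 k))
    (hcontG : ∀ (i : Fin s), ∀ j ∈ Finset.Icc 1 Nx, ∀ k ∈ Finset.Icc 1 (Ny - 1), ∀ x : ℝ,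
      eval ![x, b + (k : ℝ) * hy] (G i j k) = eval ![x, b + (k : ℝ) * hy] (G i j (k + 1)))
    (hperG : ∀ (i : Fin s), ∀ j ∈ Finset.Icc 1 Nx, ∀ x : ℝ,
      eval ![x, b + (Ny : ℝ) * hy] (G i j Ny) = eval ![x, b] (G i j 1)) :
    ∑ j ∈ Finset.Icc 1 Nx, ∑ k ∈ Finset.Icc 1 Ny,
        (∫ x in (a + ((j - 1 : ℕ) : ℝ) * hx)..(a + (j : ℝ) * hx),
          ∫ y in (b + ((k - 1 : ℕ) : ℝ) * hy)..(b + (k : ℝ) * hy),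
            eval ![x, y] (v j k))
      = ∑ j ∈ Finset.Icc 1 Nx, ∑ k ∈ Finset.Icc 1 Ny,
          (∫ x in (a + ((j - 1 : ℕ) : ℝ) * hx)..(a + (j : ℝ) * hx),
            ∫ y in (b + ((k - 1 : ℕ) : ℝ) * hy)..(b + (k : ℝ) * hy),
              eval ![x, y] (u j k)) :=
  flux_conservative_hermite_conservation_2d_general Nx Ny a b hx hy s α Δt F G u v hupdate hcontF
    hperF hcontG hperG
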